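/- Let n ≥ 0, 0 ≤ k ≤ n+1, and r ≥ 1. The pullback map Φ^* restricts to a linear isomorphism from P_r^-Λ^k(ℝ^{n+1}) onto P_{2r+k}^-Λ^k_e(ℝ^{n+1}), the space of even forms in P_{2r+k}^-Λ^k(ℝ^{n+1}). -/

import Mathlib

open scoped BigOperators
open MeasureTheory

noncomputable section

/-- Vectors in `ℝ^m`. -/
abbrev Vec (m : ℕ) := Fin m → ℝ

/-- Differential `k`-forms on `ℝ^m`, given pointwise as alternating `k`-tensors. -/
abbrev Form (m k : ℕ) := Vec m → (Vec m [⋀^Fin k]→ₗ[ℝ] ℝ)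

/-- A multivariate polynomial has (total) degree at most `r : ℤ`. -/
def degLE {m : ℕ} (r : ℤ) (p : MvPolynomial (Fin m) ℝ) : Prop :=
  ∀ d ∈ p.support, ((d.sum fun _ e => e : ℕ) : ℤ) ≤ r

/-- `P_rΛ^k(ℝ^m)`: differential `k`-forms with polynomial coefficients of degree at most `r`. -/
def PL (m k : ℕ) (r : ℤ) : Set (Form m k) :=
  {α | ∀ v : Fin k → Vec m, ∃ p : MvPolynomial (Fin m) ℝ,
      degLE r p ∧ ∀ x, α x v = MvPolynomial.eval x p}

/-- Interior product with the radial vector field `X = Σ xᵢ ∂/∂xᵢ`. -/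
def iU {m k : ℕ} (β : Form m (k + 1)) : Form m k := fun x => (β x).curryLeft x

/-- `P_r⁻Λ^k(ℝ^m) := i_X P_{r-1}Λ^{k+1}(ℝ^m)`. -/
def PLm (m k : ℕ) (r : ℤ) : Set (Form m k) := iU '' PL m (k + 1) (r - 1)

/-- The reflection negating the `i`-th coordinate, as a map. -/
def reflFun (m : ℕ) (i : Fin m) (u : Vec m) : Vec m := fun j => if j = i then -u j else u j

/-- The reflection negating the `i`-th coordinate, as a linear map. -/
def reflLin (m : ℕ) (i : Fin m) : Vec m →ₗ[ℝ] Vec m :=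
  LinearMap.pi fun j => if j = i then -LinearMap.proj j else LinearMap.proj j

/-- Pullback of an ambient form along the reflection `R_i`. -/
def reflPull (m k : ℕ) (i : Fin m) (α : Form m k) : Form m k :=
  fun x => (α (reflFun m i x)).compLinearMap (reflLin m i)

/-- A form on `ℝ^m` is even if it is invariant under all coordinate reflections. -/
def IsEven (m k : ℕ) (α : Form m k) : Prop := ∀ i, reflPull m k i α = α

/-- A form on `ℝ^m` is odd if every coordinate reflection negates it. -/
def IsOdd (m k : ℕ) (α : Form m k) : Prop := ∀ i, reflPull m k i α = -α

/-- The map `Φ(u) = (u₁², …, u_m²)`. -/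
def Phi (m : ℕ) (u : Vec m) : Vec m := fun i => u i ^ 2

/-- The differential of `Φ` at `u`. -/
def dPhi (m : ℕ) (u : Vec m) : Vec m →ₗ[ℝ] Vec m :=
  LinearMap.pi fun i => (2 * u i) • LinearMap.proj i

/-- Pullback of ambient forms along `Φ`. -/
def phiPull (m k : ℕ) (α : Form m k) : Form m k :=
  fun u => (α (Phi m u)).compLinearMap (dPhi m u)

/-- The standard simplex `T^{m-1} ⊂ ℝ^m`. -/
def simplexSet (m : ℕ) : Set (Vec m) := {x | (∀ i, 0 ≤ x i) ∧ ∑ i, x i = 1}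

/-- The unit sphere `S^{m-1} ⊂ ℝ^m`. -/
def sphereSet (m : ℕ) : Set (Vec m) := {u | ∑ i, u i ^ 2 = 1}

/-- The linear functional `v ↦ ⟨u, v⟩`. -/
def dotLin (m : ℕ) (u : Vec m) : Vec m →ₗ[ℝ] ℝ := ∑ i, u i • LinearMap.proj i

/-- Orthogonal projection onto the tangent space of the sphere at `u`. -/
def projSph (m : ℕ) (u : Vec m) : Vec m →ₗ[ℝ] Vec m :=
  LinearMap.id - (dotLin m u).smulRight u

/-- The linear functional `v ↦ Σ vᵢ`. -/
def sumLin (m : ℕ) : Vec m →ₗ[ℝ] ℝ := ∑ i, LinearMap.proj i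

/-- Orthogonal projection onto the tangent hyperplane `{Σ vᵢ = 0}` of the simplex. -/
def projSim (m : ℕ) : Vec m →ₗ[ℝ] Vec m :=
  LinearMap.id - ((m : ℝ)⁻¹ • sumLin m).smulRight (fun _ => 1)

/-- Differential `k`-forms on a subset `M ⊆ ℝ^m`, encoded at each point by the canonical
alternating tensor on `ℝ^m` that vanishes in the directions normal to `M` (i.e. the
pullback along the inclusion, extended by the tangent projection). -/
abbrev FormOn (m : ℕ) (M : Set (Vec m)) (k : ℕ) := M → (Vec m [⋀^Fin k]→ₗ[ℝ] ℝ)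

/-- Restriction (pullback along the inclusion) of an ambient form to the simplex. -/
def resSim (m k : ℕ) (α : Form m k) : FormOn m (simplexSet m) k :=
  fun x => (α x.1).compLinearMap (projSim m)

/-- Restriction (pullback along the inclusion) of an ambient form to the sphere. -/
def resSph (m k : ℕ) (α : Form m k) : FormOn m (sphereSet m) k :=
  fun u => (α u.1).compLinearMap (projSph m u.1)

/-- `P_rΛ^k(T^{m-1})`. -/
def PLsim (m k : ℕ) (r : ℤ) : Set (FormOn m (simplexSet m) k) := resSim m k '' PL m k r

/-- `P_rΛ^k(S^{m-1})`. -/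
def PLsph (m k : ℕ) (r : ℤ) : Set (FormOn m (sphereSet m) k) := resSph m k '' PL m k r

/-- `P_r⁻Λ^k(T^{m-1})`. -/
def PLmsim (m k : ℕ) (r : ℤ) : Set (FormOn m (simplexSet m) k) := resSim m k '' PLm m k r

/-- `P_r⁻Λ^k(S^{m-1})`. -/
def PLmsph (m k : ℕ) (r : ℤ) : Set (FormOn m (sphereSet m) k) := resSph m k '' PLm m k r

lemma phi_mem_simplex {m : ℕ} {u : Vec m} (hu : u ∈ sphereSet m) :
    Phi m u ∈ simplexSet m :=
  ⟨fun _ => sq_nonneg _, hu⟩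

/-- Pullback `Φ^* : Λ^k(T^{m-1}) → Λ^k(S^{m-1})` along `Φ : S^{m-1} → T^{m-1}`. -/
def phiPullTS (m k : ℕ) (a : FormOn m (simplexSet m) k) : FormOn m (sphereSet m) k :=
  fun u => (a ⟨Phi m u.1, phi_mem_simplex u.2⟩).compLinearMap
    ((dPhi m u.1).comp (projSph m u.1))

lemma refl_mem_sphere {m : ℕ} {i : Fin m} {u : Vec m} (hu : u ∈ sphereSet m) :
    reflFun m i u ∈ sphereSet m := by
  have : ∀ j, (reflFun m i u j) ^ 2 = u j ^ 2 := by
    intro j; simp only [reflFun]; split <;> ring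
  simpa only [sphereSet, Set.mem_setOf_eq, this] using hu

/-- Pullback of a form on the sphere along the reflection `R_i`. -/
def reflPullSph (m k : ℕ) (i : Fin m) (α : FormOn m (sphereSet m) k) :
    FormOn m (sphereSet m) k :=
  fun u => (α ⟨reflFun m i u.1, refl_mem_sphere u.2⟩).compLinearMap (reflLin m i)

/-- A form on the sphere is even if it is invariant under all coordinate reflections. -/
def IsEvenSph (m k : ℕ) (α : FormOn m (sphereSet m) k) : Prop :=
  ∀ i, reflPullSph m k i α = α

/-- A form on the sphere is odd if every coordinate reflection negates it. -/
def IsOddSph (m k : ℕ) (α : FormOn m (sphereSet m) k) : Prop :=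
  ∀ i, reflPullSph m k i α = -α

/-- The bubble function `u_N = u₁ ⋯ u_m`. -/
def bubble (m : ℕ) (u : Vec m) : ℝ := ∏ i, u i

/-- Multiplication of a form on the sphere by the bubble function. -/
def bubbleSmul (m k : ℕ) (α : FormOn m (sphereSet m) k) : FormOn m (sphereSet m) k :=
  fun u => bubble m u.1 • α u

/-- Multiplication of an ambient form by the bubble function. -/
def bubbleSmulAmb (m k : ℕ) (α : Form m k) : Form m k :=
  fun u => bubble m u • α u

/-- The standard volume form on `ℝ^m`. -/
def volForm (m : ℕ) : (Vec m) [⋀^Fin m]→ₗ[ℝ] ℝ := (Pi.basisFun ℝ (Fin m)).det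

/-- Iterated interior product: insert the vectors `v 0, …, v (k-1)` into the
first `k` slots of an alternating `(k+j)`-tensor. -/
def contrMany {m : ℕ} : (k : ℕ) → (Fin k → Vec m) → {j : ℕ} →
    ((Vec m) [⋀^Fin (k + j)]→ₗ[ℝ] ℝ) → ((Vec m) [⋀^Fin j]→ₗ[ℝ] ℝ)
  | 0, _, j, α => α.domDomCongr (finCongr (Nat.zero_add j))
  | (k + 1), v, j, α =>
      contrMany k (fun i => v i.succ)
        ((α.domDomCongr (finCongr (by omega : (k + 1) + j = (k + j) + 1))).curryLeft (v 0))

/-- The Hodge star on alternating tensors on `ℝ^m` (standard metric and orientation):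
`(⋆α)(w₁,…,w_{m-k}) = (1/k!) Σ_g α(e_{g 0},…,e_{g(k-1)}) vol(e_{g 0},…,e_{g(k-1)},w₁,…,w_{m-k})`. -/
def starAlt (m k : ℕ) (α : (Vec m) [⋀^Fin k]→ₗ[ℝ] ℝ) : (Vec m) [⋀^Fin (m - k)]→ₗ[ℝ] ℝ :=
  if h : k ≤ m then
    (k.factorial : ℝ)⁻¹ •
      ∑ g : Fin k → Fin m,
        α (fun i => Pi.single (g i) 1) •
          contrMany k (fun i => Pi.single (g i) 1)
            ((volForm m).domDomCongr (finCongr (by omega : m = k + (m - k))))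
  else 0

/-- The Hodge star `⋆_{ℝ^m}` applied pointwise to ambient forms. -/
def starR (m k : ℕ) (α : Form m k) : Form m (m - k) := fun x => starAlt m k (α x)

/-- The wedge product of alternating tensors. -/
def wedgeAlt {m k l : ℕ} (α : (Vec m) [⋀^Fin k]→ₗ[ℝ] ℝ) (β : (Vec m) [⋀^Fin l]→ₗ[ℝ] ℝ) :
    (Vec m) [⋀^Fin (k + l)]→ₗ[ℝ] ℝ :=
  ((TensorProduct.lid ℝ ℝ).toLinearMap.compAlternatingMap (α.domCoprod β)).domDomCongr
    finSumFinEquiv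

/-- The conormal `ν = Σ uᵢ duᵢ` at `u`, as an alternating 1-tensor. -/
def nuForm (m : ℕ) (u : Vec m) : (Vec m) [⋀^Fin 1]→ₗ[ℝ] ℝ :=
  AlternatingMap.ofSubsingleton ℝ (Vec m) ℝ (0 : Fin 1) (dotLin m u)

/-- The extended Hodge star `⋆_{S^{m-1}} α := ⋆_{ℝ^m}(ν ∧ α)` on ambient forms. -/
def starSphAmb (m k : ℕ) (α : Form m k) : Form m (m - (1 + k)) :=
  fun x => starAlt m (1 + k) (wedgeAlt (nuForm m x) (α x))

/-- The Hodge star of a form on the sphere (w.r.t. the round metric and the orientation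
induced by the outward normal), computed as the restriction of `⋆_{ℝ^m}(ν ∧ ·)`. -/
def starSph (m k : ℕ) (α : FormOn m (sphereSet m) k) :
    FormOn m (sphereSet m) (m - (1 + k)) :=
  fun u => (starAlt m (1 + k) (wedgeAlt (nuForm m u.1) (α u))).compLinearMap (projSph m u.1)

/-- Re-indexing a form along an equality of form degrees. -/
def castForm {m k l : ℕ} (h : k = l) (α : Form m k) : Form m l :=
  fun x => (α x).domDomCongr (finCongr h)

/-- Re-indexing a form on a subset along an equality of form degrees. -/
def castFormOn {m : ℕ} {M : Set (Vec m)} {k l : ℕ} (h : k = l) (α : FormOn m M k) :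
    FormOn m M l :=
  fun x => (α x).domDomCongr (finCongr h)

/-- Trace on the boundary of the simplex vanishes: at every boundary point (a point of some
face `xᵢ = 0`), the form vanishes on vectors tangent to that face. -/
def vanishBdry (m k : ℕ) (a : FormOn m (simplexSet m) k) : Prop :=
  ∀ (x : simplexSet m) (i : Fin m), x.1 i = 0 →
    ∀ v : Fin k → Vec m, (∀ j, (∑ l, v j l) = 0 ∧ v j i = 0) → a x v = 0

/-- `P̊_rΛ^k(T^{m-1})`: forms in `P_rΛ^k(T^{m-1})` with vanishing trace on the boundary. -/
def PLosim (m k : ℕ) (r : ℤ) : Set (FormOn m (simplexSet m) k) :=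
  {a ∈ PLsim m k r | vanishBdry m k a}

/-- `P̊_r⁻Λ^k(T^{m-1})`. -/
def PLmosim (m k : ℕ) (r : ℤ) : Set (FormOn m (simplexSet m) k) :=
  {a ∈ PLmsim m k r | vanishBdry m k a}

/-- A form on the sphere vanishes (as an alternating tensor on the tangent space)
at every point of `S^{m-1} ∩ Γ`, where `Γ = ∪ᵢ {uᵢ = 0}`. -/
def zeroOnGammaSph (m k : ℕ) (α : FormOn m (sphereSet m) k) : Prop :=
  ∀ u : sphereSet m, (∃ i, u.1 i = 0) →
    ∀ v : Fin k → Vec m, (∀ j, ∑ l, u.1 l * v j l = 0) → α u v = 0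

/-- An ambient form vanishes (as an alternating tensor) at every point of `Γ`. -/
def zeroOnGammaAmb (m k : ℕ) (α : Form m k) : Prop :=
  ∀ u : Vec m, (∃ i, u i = 0) → α u = 0

/-- The wedge product of forms on a subset. -/
def wedgeOn {m : ℕ} {M : Set (Vec m)} {k l : ℕ} (a : FormOn m M k) (b : FormOn m M l) :
    FormOn m M (k + l) :=
  fun x => wedgeAlt (a x) (b x)

/-- The base region of the parametrization of the simplex. -/
def baseSimplex (n : ℕ) : Set (Fin n → ℝ) := {y | (∀ j, 0 ≤ y j) ∧ ∑ j, y j ≤ 1}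

/-- Parametrization `y ↦ (1 - Σy, y)` of `T^n` over the base region. -/
def simplexParam (n : ℕ) (y : Fin n → ℝ) : Vec (n + 1) := Fin.cons (1 - ∑ j, y j) y

lemma simplexParam_mem {n : ℕ} {y : Fin n → ℝ} (h : y ∈ baseSimplex n) :
    simplexParam n y ∈ simplexSet (n + 1) := by
  constructor
  · intro i
    refine Fin.cases ?_ ?_ i
    · simpa [simplexParam] using sub_nonneg.mpr h.2
    · intro j; simpa [simplexParam] using h.1 j
  · simp [simplexParam, Fin.sum_cons]

/-- The coordinate tangent vectors `∂x/∂y_j = e_{j+1} - e_0` of the parametrization,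
a positively oriented frame for the orientation of `T^n` induced from the outward-normal
orientation of `S^n` via `Φ`. -/
def simplexTangent (n : ℕ) (j : Fin n) : Vec (n + 1) :=
  Fin.cons (-1) (Pi.single j 1)

open Classical in
/-- The integral of an `n`-form over the oriented simplex `T^n`. -/
def integralSimplex (n : ℕ) (ω : FormOn (n + 1) (simplexSet (n + 1)) n) : ℝ :=
  ∫ y : Fin n → ℝ,
    if h : y ∈ baseSimplex n then ω ⟨simplexParam n y, simplexParam_mem h⟩ (simplexTangent n)
    else 0

/-- Forms on a subset that genuinely are pullbacks to the simplex: they vanish in the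
normal directions (canonical representatives). -/
def TangentialSim (m k : ℕ) (a : FormOn m (simplexSet m) k) : Prop :=
  ∀ x, (a x).compLinearMap (projSim m) = a x

/-- Continuity of a form on a subset. -/
def ContFormOn (m : ℕ) (M : Set (Vec m)) (k : ℕ) (a : FormOn m M k) : Prop :=
  ∀ v : Fin k → Vec m, Continuous fun x : M => a x v

/-- The Riemannian volume form of the round sphere `S^{m-1}` (outward-normal orientation),
i.e. the restriction of `⋆_{ℝ^m} ν`. -/
def volSph (m : ℕ) : FormOn m (sphereSet m) (m - 1) :=
  fun u => (starAlt m 1 (nuForm m u.1)).compLinearMap (projSph m u.1)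

/-!
Write a `k`-form through its coefficients `α x (e_{g 0}, …, e_{g (k-1)})`, `g : Fin k → Fin m`.
Pulling back along `Φ` multiplies the `g`-coefficient by `∏ₗ 2 u_{g l}` and substitutes `u_i²`
for `x_i`. So `Φ^*α` is even, `Φ^*` is injective on polynomial forms (`p ↦ p(u²)` is), the
degree becomes `2r + k`, and `Φ_* U = 2X` gives `Φ^* i_X β = i_U (½ Φ^*β)`.

Conversely, for an even form and injective `g`, evenness under `R_i` says that the
`g`-coefficient `p` satisfies `p(R_i x) = ∓p(x)` according as `i` lies in the range of `g` or
not. Hence the exponent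
of `x_i` in each monomial of `p` is odd exactly on that range, `p = (∏ₗ x_{g l}) q(x²)` with
`deg q ≤ (deg p - k)/2`, and the `q`'s are the coefficients of a preimage. For `α = i_X β` even,
averaging `β` over the reflections makes it even without changing `i_X β`.
-/

open MvPolynomial

section Degree

variable {m : ℕ}

lemma degLE_iff_degree {r : ℤ} {p : MvPolynomial (Fin m) ℝ} :
    degLE r p ↔ ∀ d ∈ p.support, (d.degree : ℤ) ≤ r :=
  Iff.rfl

lemma degLE_zero (r : ℤ) : degLE r (0 : MvPolynomial (Fin m) ℝ) := by
  simp [degLE_iff_degree]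

lemma degLE_monomial (d : Fin m →₀ ℕ) (c : ℝ) : degLE d.degree (monomial d c) := by
  rw [degLE_iff_degree]
  intro e he
  rw [Finset.mem_singleton.1 (support_monomial_subset he)]

lemma degLE.mono {r s : ℤ} {p : MvPolynomial (Fin m) ℝ} (hp : degLE r p) (h : r ≤ s) :
    degLE s p :=
  fun d hd => (hp d hd).trans h

lemma degLE_sum {r : ℤ} {ι : Type*} {s : Finset ι} {f : ι → MvPolynomial (Fin m) ℝ}
    (h : ∀ a ∈ s, degLE r (f a)) : degLE r (∑ a ∈ s, f a) := by
  intro d hd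
  obtain ⟨a, ha, hda⟩ := Finset.mem_biUnion.1 (support_sum hd)
  exact h a ha d hda

lemma degLE.C_mul {r : ℤ} {p : MvPolynomial (Fin m) ℝ} (hp : degLE r p) (c : ℝ) :
    degLE r (C c * p) := by
  intro d hd
  rw [← smul_eq_C_mul] at hd
  exact hp d (Finsupp.support_smul hd)

lemma degLE.add {r : ℤ} {p q : MvPolynomial (Fin m) ℝ} (hp : degLE r p) (hq : degLE r q) :
    degLE r (p + q) := by
  intro d hd
  rcases Finset.mem_union.1 (support_add hd) with h | h
  exacts [hp d h, hq d h]

lemma degLE.mul {r s : ℤ} {p q : MvPolynomial (Fin m) ℝ} (hp : degLE r p) (hq : degLE s q) :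
    degLE (r + s) (p * q) := by
  rw [degLE_iff_degree] at *
  intro d hd
  obtain ⟨d₁, hd₁, d₂, hd₂, rfl⟩ := Finset.mem_add.1 (support_mul p q hd)
  push_cast [map_add]
  exact add_le_add (hp d₁ hd₁) (hq d₂ hd₂)

lemma degLE_X (i : Fin m) : degLE 1 (X i : MvPolynomial (Fin m) ℝ) := by
  simpa [X] using degLE_monomial (Finsupp.single i 1) (1 : ℝ)

lemma degLE_prod_X {k : ℕ} (g : Fin k → Fin m) :
    degLE k (∏ i, X (g i) : MvPolynomial (Fin m) ℝ) := by
  have h := degLE_monomial (∑ i, Finsupp.single (g i) 1) (1 : ℝ)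
  simp only [monomial_sum_one, map_sum, Finsupp.degree_single] at h
  simpa [X] using h

lemma degLE.expand_two {r : ℤ} {p : MvPolynomial (Fin m) ℝ} (hp : degLE r p) :
    degLE (2 * r) (expand 2 p) := by
  rw [degLE_iff_degree] at *
  intro d hd
  obtain ⟨e, he, rfl⟩ := Finset.mem_image.1 (support_expand_subset p hd)
  push_cast [map_nsmul, smul_eq_mul]
  exact mul_le_mul_of_nonneg_left (hp e he) zero_le_two

end Degree

section Parity

variable {m : ℕ}

lemma prod_reflFun_pow (i : Fin m) (x : Vec m) (d : Fin m →₀ ℕ) :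
    ∏ j, reflFun m i x j ^ d j = (-1) ^ d i * ∏ j, x j ^ d j := by
  have h : ∀ j, reflFun m i x j ^ d j = (if j = i then (-1) ^ d j else 1) * x j ^ d j := by
    intro j
    unfold reflFun
    split_ifs
    · rw [neg_pow]
    · rw [one_mul]
  rw [Finset.prod_congr rfl fun j _ => h j, Finset.prod_mul_distrib, Finset.prod_ite_eq',
    if_pos (Finset.mem_univ i)]

/-- The polynomial `p(R_i x)`. -/
def negVar (i : Fin m) (p : MvPolynomial (Fin m) ℝ) : MvPolynomial (Fin m) ℝ :=
  ∑ d ∈ p.support, monomial d ((-1) ^ d i * coeff d p)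

lemma eval_negVar (i : Fin m) (p : MvPolynomial (Fin m) ℝ) (x : Vec m) :
    eval x (negVar i p) = eval (reflFun m i x) p := by
  rw [negVar, map_sum, eval_eq' (reflFun m i x)]
  refine Finset.sum_congr rfl fun d _ => ?_
  rw [eval_monomial, Finsupp.prod_fintype _ _ (fun j => pow_zero (x j)), prod_reflFun_pow]
  ring

lemma coeff_negVar (i : Fin m) (p : MvPolynomial (Fin m) ℝ) (d : Fin m →₀ ℕ) :
    coeff d (negVar i p) = (-1) ^ d i * coeff d p := by
  simp only [negVar, coeff_sum, coeff_monomial, Finset.sum_ite_eq', mem_support_iff]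
  split_ifs with h
  · rfl
  · simp [not_not.1 h]

lemma degLE.negVar {r : ℤ} {p : MvPolynomial (Fin m) ℝ} (hp : degLE r p) (i : Fin m) :
    degLE r (negVar i p) :=
  degLE_sum fun d hd => (degLE_monomial d _).mono (hp d hd)

lemma neg_one_pow_eq_of_eval_reflFun {i : Fin m} {ε : ℝ} {p : MvPolynomial (Fin m) ℝ}
    (h : ∀ x, eval (reflFun m i x) p = ε * eval x p) {d : Fin m →₀ ℕ}
    (hd : d ∈ p.support) :
    (-1) ^ d i = ε := by
  have hp : negVar i p = C ε * p := funext fun x => by simp [eval_negVar, h]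
  have hd' := congrArg (coeff d) hp
  rw [coeff_negVar, coeff_C_mul] at hd'
  exact mul_right_cancel₀ (mem_support_iff.1 hd) hd'

def halfExp (d : Fin m →₀ ℕ) : Fin m →₀ ℕ :=
  Finsupp.mapRange (· / 2) (Nat.zero_div 2) d

/-- For `p` whose exponent of `X i` is odd exactly when `i ∈ S`, the polynomial `q` with
`p = (∏ i ∈ S, X i) * q(X₁², …, X_m²)`. -/
def halfPoly (p : MvPolynomial (Fin m) ℝ) : MvPolynomial (Fin m) ℝ :=
  ∑ d ∈ p.support, monomial (halfExp d) (coeff d p)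

lemma halfPoly_neg (p : MvPolynomial (Fin m) ℝ) : halfPoly (-p) = -halfPoly p := by
  simp [halfPoly, support_neg, ← Finset.sum_neg_distrib]

lemma eq_two_mul_div_two_add_ite {n : ℕ} {P : Prop} [Decidable P] (h : Odd n ↔ P) :
    n = 2 * (n / 2) + if P then 1 else 0 := by
  rw [Nat.odd_iff] at h
  split_ifs with hP
  · have := h.2 hP; omega
  · have := mt h.1 hP; omega

variable {S : Finset (Fin m)} {p : MvPolynomial (Fin m) ℝ}

lemma eval_eq_prod_mul_eval_halfPoly (hS : ∀ d ∈ p.support, ∀ i, Odd (d i) ↔ i ∈ S)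
    (x : Vec m) : eval x p = (∏ i ∈ S, x i) * eval (Phi m x) (halfPoly p) := by
  rw [eval_eq', halfPoly, map_sum, Finset.mul_sum]
  refine Finset.sum_congr rfl fun d hd => ?_
  have hpow : ∀ i, x i ^ d i = (if i ∈ S then x i else 1) * (x i ^ 2) ^ (d i / 2) := by
    intro i
    conv_lhs => rw [eq_two_mul_div_two_add_ite (hS d hd i)]
    split_ifs <;> ring
  simp only [eval_monomial, Finsupp.prod_fintype _ _ (fun j => pow_zero _), halfExp,
    Finsupp.mapRange_apply, Phi, hpow, Finset.prod_mul_distrib, Finset.prod_ite_mem,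
    Finset.univ_inter]
  ring

lemma degLE_halfPoly {t : ℤ} (hS : ∀ d ∈ p.support, ∀ i, Odd (d i) ↔ i ∈ S)
    (hp : degLE (2 * t + S.card) p) : degLE t (halfPoly p) := by
  refine degLE_sum fun d hd => (degLE_monomial _ _).mono ?_
  have hdeg : d.degree = 2 * (halfExp d).degree + S.card := by
    simp only [Finsupp.degree_eq_sum, halfExp, Finsupp.mapRange_apply]
    rw [Finset.sum_congr rfl fun i _ => eq_two_mul_div_two_add_ite (hS d hd i),
      Finset.sum_add_distrib, Finset.mul_sum, Finset.sum_ite_mem, Finset.univ_inter,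
      Finset.card_eq_sum_ones]
  have hd' : ((2 * (halfExp d).degree + S.card : ℕ) : ℤ) ≤ 2 * t + S.card := hdeg ▸ hp d hd
  push_cast at hd'
  linarith

end Parity

section AlternatingMaps

variable {m k : ℕ}

def frame (g : Fin k → Fin m) : Fin k → Vec m := fun i => Pi.single (g i) 1

lemma apply_eq_sum_frame (f : Vec m [⋀^Fin k]→ₗ[ℝ] ℝ) (v : Fin k → Vec m) :
    f v = ∑ g : Fin k → Fin m, (∏ i, v i (g i)) * f (frame g) := by
  conv_lhs => rw [show v = fun i => ∑ j, v i j • Pi.single j 1 from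
    funext fun i => pi_eq_sum_univ' (v i)]
  change f.toMultilinearMap _ = _
  rw [MultilinearMap.map_sum]
  exact Finset.sum_congr rfl fun g _ => f.toMultilinearMap.map_smul_univ _ _

lemma apply_frame_eq_zero (f : Vec m [⋀^Fin k]→ₗ[ℝ] ℝ) {g : Fin k → Fin m}
    (hg : ¬Function.Injective g) : f (frame g) = 0 :=
  f.map_eq_zero_of_not_injective _ fun h =>
    hg (Function.Injective.of_comp (f := fun j => (Pi.single j 1 : Vec m)) h)

def prodCoord (g : Fin k → Fin m) : MultilinearMap ℝ (fun _ : Fin k => Vec m) ℝ :=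
  (MultilinearMap.mkPiAlgebra ℝ (Fin k) ℝ).compLinearMap fun i => LinearMap.proj (g i)

lemma sum_smul_prodCoord_apply (c : (Fin k → Fin m) → ℝ) (v : Fin k → Vec m) :
    (∑ g, c g • prodCoord g) v = ∑ g, c g * ∏ i, v i (g i) := by
  simp [prodCoord]

def altOfAntisymm (c : (Fin k → Fin m) → ℝ)
    (hc : ∀ g (a b : Fin k), a ≠ b → c (g ∘ Equiv.swap a b) = -c g) :
    Vec m [⋀^Fin k]→ₗ[ℝ] ℝ where
  toMultilinearMap := ∑ g, c g • prodCoord g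
  map_eq_zero_of_eq' v a b hvab hab := by
    change (∑ g, c g • prodCoord g) v = 0
    rw [sum_smul_prodCoord_apply]
    have hv : ∀ i, v (Equiv.swap a b i) = v i := Equiv.apply_swap_eq_self hvab
    have hneg : ∑ g, c g * ∏ i, v i (g i) = -∑ g, c g * ∏ i, v i (g i) := by
      rw [← Finset.sum_neg_distrib,
        ← (Equiv.arrowCongr (Equiv.swap a b) (Equiv.refl (Fin m))).sum_comp]
      refine Finset.sum_congr rfl fun g _ => ?_
      have hg : Equiv.arrowCongr (Equiv.swap a b) (Equiv.refl (Fin m)) g =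
          g ∘ Equiv.swap a b := by
        funext i; simp [Equiv.arrowCongr]
      rw [hg, hc g a b hab, ← Equiv.prod_comp (Equiv.swap a b) (fun i => v i (g i))]
      simp [hv]
    linarith

lemma altOfAntisymm_apply (c : (Fin k → Fin m) → ℝ)
    (hc : ∀ g (a b : Fin k), a ≠ b → c (g ∘ Equiv.swap a b) = -c g) (v : Fin k → Vec m) :
    altOfAntisymm c hc v = ∑ g, c g * ∏ i, v i (g i) :=
  sum_smul_prodCoord_apply c v

end AlternatingMaps

section Pullbacks

variable {m k : ℕ}

@[simp]
lemma iU_apply (β : Form m (k + 1)) (x : Vec m) (v : Fin k → Vec m) :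
    iU β x v = β x (Fin.cons x v) := rfl

@[simp]
lemma phiPull_apply (α : Form m k) (u : Vec m) (v : Fin k → Vec m) :
    phiPull m k α u v = α (Phi m u) (fun i => dPhi m u (v i)) := rfl

lemma reflLin_apply (i : Fin m) (v : Vec m) : reflLin m i v = reflFun m i v := by
  funext j
  unfold reflLin reflFun
  split_ifs <;> simp [*]

@[simp]
lemma reflPull_apply (i : Fin m) (α : Form m k) (x : Vec m) (v : Fin k → Vec m) :
    reflPull m k i α x v = α (reflFun m i x) (fun l => reflFun m i (v l)) := by
  simp [reflPull, reflLin_apply]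

lemma dPhi_apply (u w : Vec m) (j : Fin m) : dPhi m u w j = 2 * u j * w j := by
  simp [dPhi, mul_assoc]

lemma reflFun_reflFun (i : Fin m) (x : Vec m) : reflFun m i (reflFun m i x) = x := by
  funext j; unfold reflFun; split_ifs <;> ring

lemma reflFun_comm (i i' : Fin m) (x : Vec m) :
    reflFun m i (reflFun m i' x) = reflFun m i' (reflFun m i x) := by
  funext j; unfold reflFun; split_ifs <;> ring

lemma Phi_reflFun (i : Fin m) (u : Vec m) : Phi m (reflFun m i u) = Phi m u := by
  funext j; unfold Phi reflFun; split_ifs <;> ring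

lemma reflFun_single (i a : Fin m) :
    reflFun m i (Pi.single a 1) = (if a = i then -1 else 1 : ℝ) • (Pi.single a 1 : Vec m) := by
  funext j
  unfold reflFun
  by_cases hja : j = a <;> by_cases hai : a = i <;> simp_all

lemma phiPull_add (a b : Form m k) : phiPull m k (a + b) = phiPull m k a + phiPull m k b := rfl

lemma phiPull_smul (c : ℝ) (a : Form m k) : phiPull m k (c • a) = c • phiPull m k a := rfl

lemma reflPull_add (i : Fin m) (a b : Form m k) :
    reflPull m k i (a + b) = reflPull m k i a + reflPull m k i b := rfl

lemma reflPull_smul (i : Fin m) (c : ℝ) (a : Form m k) :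
    reflPull m k i (c • a) = c • reflPull m k i a := rfl

lemma iU_add (a b : Form m (k + 1)) : iU (a + b) = iU a + iU b := rfl

lemma iU_smul (c : ℝ) (a : Form m (k + 1)) : iU (c • a) = c • iU a := rfl

lemma reflPull_reflPull (i : Fin m) (a : Form m k) : reflPull m k i (reflPull m k i a) = a := by
  funext x; ext v
  simp [reflFun_reflFun]

lemma reflPull_comm (i i' : Fin m) (a : Form m k) :
    reflPull m k i (reflPull m k i' a) = reflPull m k i' (reflPull m k i a) := by
  funext x; ext v
  simp [reflFun_comm i]

lemma iU_reflPull (i : Fin m) (γ : Form m (k + 1)) :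
    iU (reflPull m (k + 1) i γ) = reflPull m k i (iU γ) := by
  funext x; ext v
  simp only [iU_apply, reflPull_apply]
  congr 1
  funext l
  cases l using Fin.cases <;> simp

lemma isEven_phiPull (α : Form m k) : IsEven m k (phiPull m k α) := by
  intro i
  funext x; ext v
  simp only [reflPull_apply, phiPull_apply, Phi_reflFun]
  congr 1
  funext l j
  simp only [dPhi_apply]
  unfold reflFun
  split_ifs <;> ring

lemma iU_phiPull (γ : Form m (k + 1)) :
    iU (phiPull m (k + 1) γ) = (2 : ℝ) • phiPull m k (iU γ) := by
  funext u; ext v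
  have hu : dPhi m u u = (2 : ℝ) • Phi m u := by
    funext j; simp [dPhi_apply, Phi]; ring
  have hcons : (fun l => dPhi m u ((Fin.cons u v : Fin (k + 1) → Vec m) l)) =
      Fin.cons ((2 : ℝ) • Phi m u) (fun i => dPhi m u (v i)) := by
    funext l
    cases l using Fin.cases <;> simp [hu]
  simp only [iU_apply, phiPull_apply, hcons]
  rw [← Fin.update_cons_zero (Phi m u), (γ (Phi m u)).map_update_smul, Fin.update_cons_zero]
  rfl

end Pullbacks

section PolynomialForms

variable {m k : ℕ}

lemma mem_PL_of_frame {r : ℤ} {α : Form m k}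
    (h : ∀ g : Fin k → Fin m, ∃ p, degLE r p ∧ ∀ x, α x (frame g) = eval x p) :
    α ∈ PL m k r := by
  choose p hp hpα using h
  intro v
  refine ⟨∑ g, C (∏ i, v i (g i)) * p g, degLE_sum fun g _ => (hp g).C_mul _, fun x => ?_⟩
  simp [apply_eq_sum_frame (α x) v, hpα]

lemma PL_add {r : ℤ} {a b : Form m k} (ha : a ∈ PL m k r) (hb : b ∈ PL m k r) :
    a + b ∈ PL m k r := by
  intro v
  obtain ⟨p, hp, hpa⟩ := ha v
  obtain ⟨q, hq, hqb⟩ := hb v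
  exact ⟨p + q, hp.add hq, fun x => by simp [hpa, hqb]⟩

lemma PL_smul {r : ℤ} (c : ℝ) {a : Form m k} (ha : a ∈ PL m k r) : c • a ∈ PL m k r := by
  intro v
  obtain ⟨p, hp, hpa⟩ := ha v
  exact ⟨C c * p, hp.C_mul c, fun x => by simp [hpa]⟩

lemma PL_reflPull {r : ℤ} (i : Fin m) {a : Form m k} (ha : a ∈ PL m k r) :
    reflPull m k i a ∈ PL m k r := by
  intro v
  obtain ⟨p, hp, hpa⟩ := ha fun l => reflFun m i (v l)
  exact ⟨negVar i p, hp.negVar i, fun x => by simp [hpa, eval_negVar]⟩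

lemma PLm_subset_PL {r : ℤ} : PLm m k r ⊆ PL m k r := by
  rintro _ ⟨β, hβ, rfl⟩
  refine mem_PL_of_frame fun g => ?_
  choose p hp hpβ using fun j : Fin m => hβ (Fin.cons (Pi.single j 1) (frame g))
  refine ⟨∑ j, X j * p j, degLE_sum fun j _ => ?_, fun x => ?_⟩
  · simpa using (degLE_X j).mul (hp j)
  · calc iU β x (frame g)
        = β x (Function.update (Fin.cons 0 (frame g)) 0 (∑ j, x j • Pi.single j 1)) := by
          rw [← pi_eq_sum_univ' x, Fin.update_cons_zero]; rfl
      _ = eval x (∑ j, X j * p j) := by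
          rw [AlternatingMap.map_update_sum, map_sum]
          refine Finset.sum_congr rfl fun j _ => ?_
          rw [AlternatingMap.map_update_smul, Fin.update_cons_zero, hpβ, eval_mul, eval_X,
            smul_eq_mul]

lemma eval_Phi (p : MvPolynomial (Fin m) ℝ) (u : Vec m) :
    eval (Phi m u) p = eval u (expand 2 p) := by
  rw [eval_expand]; rfl

lemma phiPull_apply_frame (α : Form m k) (u : Vec m) (g : Fin k → Fin m) :
    phiPull m k α u (frame g) = (∏ i, 2 * u (g i)) * α (Phi m u) (frame g) := by
  have h : (fun i => dPhi m u (frame g i)) = fun i => (2 * u (g i)) • frame g i := by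
    funext i j
    simp only [frame, dPhi_apply, Pi.smul_apply, Pi.single_apply, smul_eq_mul]
    split_ifs with hj <;> simp [hj]
  rw [phiPull_apply, h, (α (Phi m u)).map_smul_univ, smul_eq_mul]

lemma phiPull_mem_PL {s : ℤ} {α : Form m k} (hα : α ∈ PL m k s) :
    phiPull m k α ∈ PL m k (2 * s + k) := by
  refine mem_PL_of_frame fun g => ?_
  obtain ⟨p, hp, hpα⟩ := hα (frame g)
  refine ⟨C (2 ^ k) * ((∏ i, X (g i)) * expand 2 p), ?_, fun u => ?_⟩
  · rw [add_comm]
    exact ((degLE_prod_X g).mul hp.expand_two).C_mul _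
  · rw [phiPull_apply_frame, hpα, eval_Phi]
    simp [Finset.prod_mul_distrib, mul_assoc]

lemma injOn_phiPull (r : ℤ) : Set.InjOn (phiPull m k) (PL m k r) := by
  intro α hα α' hα' h
  suffices hframe : ∀ g x, α x (frame g) = α' x (frame g) by
    funext x; ext v
    simp [apply_eq_sum_frame _ v, hframe]
  intro g
  obtain ⟨p, -, hpα⟩ := hα (frame g)
  obtain ⟨p', -, hpα'⟩ := hα' (frame g)
  have hpull : C (2 ^ k) * (∏ i, X (g i)) * expand 2 p =
      C (2 ^ k) * (∏ i, X (g i)) * expand 2 p' := by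
    refine MvPolynomial.funext fun u => ?_
    have := congrArg (fun β => β u (frame g)) h
    simp only [phiPull_apply_frame, hpα, hpα', eval_Phi] at this
    simpa [Finset.prod_mul_distrib, mul_assoc] using this
  have hne : (C (2 ^ k) * ∏ i, X (g i) : MvPolynomial (Fin m) ℝ) ≠ 0 :=
    mul_ne_zero (by simp) (Finset.prod_ne_zero_iff.2 fun i _ => X_ne_zero _)
  have hpp := expand_injective two_pos (mul_left_cancel₀ hne hpull)
  intro x
  rw [hpα, hpα', hpp]

end PolynomialForms

section Symmetrization

variable {m k : ℕ}

def reflAvg (i : Fin m) (γ : Form m k) : Form m k := (2 : ℝ)⁻¹ • (γ + reflPull m k i γ)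

def symmetrize (l : List (Fin m)) (γ : Form m k) : Form m k := l.foldr reflAvg γ

lemma symmetrize_cons (i : Fin m) (l : List (Fin m)) (γ : Form m k) :
    symmetrize (i :: l) γ = reflAvg i (symmetrize l γ) :=
  rfl

lemma reflPull_reflAvg_self (i : Fin m) (γ : Form m k) :
    reflPull m k i (reflAvg i γ) = reflAvg i γ := by
  rw [reflAvg, reflPull_smul, reflPull_add, reflPull_reflPull, add_comm]

lemma reflPull_reflAvg (i j : Fin m) (γ : Form m k) :
    reflPull m k j (reflAvg i γ) = reflAvg i (reflPull m k j γ) := by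
  rw [reflAvg, reflAvg, reflPull_smul, reflPull_add, reflPull_comm]

lemma reflAvg_of_reflPull_eq {i : Fin m} {γ : Form m k} (h : reflPull m k i γ = γ) :
    reflAvg i γ = γ := by
  rw [reflAvg, h, ← two_smul ℝ γ, smul_smul, inv_mul_cancel₀ two_ne_zero, one_smul]

lemma reflPull_symmetrize {i : Fin m} {l : List (Fin m)} (hi : i ∈ l) (γ : Form m k) :
    reflPull m k i (symmetrize l γ) = symmetrize l γ := by
  induction l with
  | nil => cases hi
  | cons j l ih =>
    rcases List.mem_cons.1 hi with rfl | hi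
    · exact reflPull_reflAvg_self _ _
    · exact (reflPull_reflAvg _ _ _).trans (congrArg _ (ih hi))

lemma isEven_symmetrize_finRange (γ : Form m k) :
    IsEven m k (symmetrize (List.finRange m) γ) :=
  fun i => reflPull_symmetrize (List.mem_finRange i) γ

lemma symmetrize_of_isEven (l : List (Fin m)) {γ : Form m k} (hγ : IsEven m k γ) :
    symmetrize l γ = γ := by
  induction l with
  | nil => rfl
  | cons i l ih => exact (congrArg (reflAvg i) ih).trans (reflAvg_of_reflPull_eq (hγ i))

lemma symmetrize_mem_PL {r : ℤ} (l : List (Fin m)) {γ : Form m k} (hγ : γ ∈ PL m k r) :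
    symmetrize l γ ∈ PL m k r := by
  induction l with
  | nil => exact hγ
  | cons i l ih => exact PL_smul _ (PL_add ih (PL_reflPull i ih))

lemma iU_symmetrize (l : List (Fin m)) (γ : Form m (k + 1)) :
    iU (symmetrize l γ) = symmetrize l (iU γ) := by
  induction l with
  | nil => rfl
  | cons i l ih =>
    rw [symmetrize_cons, symmetrize_cons, reflAvg, reflAvg, iU_smul, iU_add, iU_reflPull, ih]

end Symmetrization

section EvenFactor

variable {m k : ℕ} {γ : Form m k} {g : Fin k → Fin m} {p : MvPolynomial (Fin m) ℝ}

lemma reflPull_apply_frame (i : Fin m) (γ : Form m k) (x : Vec m) (g : Fin k → Fin m) :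
    reflPull m k i γ x (frame g) =
      (∏ l, if g l = i then -1 else 1) * γ (reflFun m i x) (frame g) := by
  rw [reflPull_apply]
  simp only [frame, reflFun_single]
  rw [(γ _).map_smul_univ, smul_eq_mul]
  rfl

lemma prod_ite_eq_of_injective (hg : Function.Injective g) (i : Fin m) :
    (∏ l, if g l = i then (-1 : ℝ) else 1) = if i ∈ Finset.univ.image g then -1 else 1 := by
  by_cases hi : i ∈ Finset.univ.image g
  · obtain ⟨l₀, -, rfl⟩ := Finset.mem_image.1 hi
    simp [hg.eq_iff]
  · rw [if_neg hi]
    exact Finset.prod_eq_one fun l _ =>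
      if_neg fun hl => hi (Finset.mem_image.2 ⟨l, Finset.mem_univ l, hl⟩)

lemma odd_iff_mem_of_isEven (hγ : IsEven m k γ) (hg : Function.Injective g)
    (hp : ∀ x, γ x (frame g) = eval x p) :
    ∀ d ∈ p.support, ∀ i, Odd (d i) ↔ i ∈ Finset.univ.image g := by
  intro d hd i
  have hrefl : ∀ x, eval (reflFun m i x) p =
      (if i ∈ Finset.univ.image g then -1 else 1) * eval x p := by
    intro x
    have := congrArg (fun β => β (reflFun m i x) (frame g)) (hγ i)
    simpa only [reflPull_apply_frame, prod_ite_eq_of_injective hg, hp, reflFun_reflFun]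
      using this.symm
  rw [← neg_one_pow_eq_neg_one_iff_odd (by norm_num : (-1 : ℝ) ≠ 1),
    neg_one_pow_eq_of_eval_reflFun hrefl hd]
  split_ifs with hi <;> norm_num [hi]

lemma frame_poly_eq_zero_of_not_injective (hg : ¬Function.Injective g)
    (hp : ∀ x, γ x (frame g) = eval x p) : p = 0 :=
  MvPolynomial.funext fun x => by rw [← hp, apply_frame_eq_zero _ hg, map_zero]

lemma degLE_halfPoly_of_isEven {t : ℤ} (hγ : IsEven m k γ)
    (hp : ∀ x, γ x (frame g) = eval x p) (hdeg : degLE (2 * t + k) p) :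
    degLE t (halfPoly p) := by
  by_cases hg : Function.Injective g
  · refine degLE_halfPoly (odd_iff_mem_of_isEven hγ hg hp) ?_
    rwa [Finset.card_image_of_injective _ hg, Finset.card_univ, Fintype.card_fin]
  · simp [frame_poly_eq_zero_of_not_injective hg hp, halfPoly, degLE_zero]

lemma apply_frame_eq_of_isEven (hγ : IsEven m k γ) (hp : ∀ x, γ x (frame g) = eval x p)
    (x : Vec m) : γ x (frame g) = (∏ l, x (g l)) * eval (Phi m x) (halfPoly p) := by
  by_cases hg : Function.Injective g
  · rw [hp, eval_eq_prod_mul_eval_halfPoly (odd_iff_mem_of_isEven hγ hg hp),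
      Finset.prod_image hg.injOn]
  · simp [frame_poly_eq_zero_of_not_injective hg hp, halfPoly, apply_frame_eq_zero _ hg]

theorem exists_phiPull_eq_of_isEven {t : ℤ} (hγ : γ ∈ PL m k (2 * t + k))
    (hev : IsEven m k γ) : ∃ δ ∈ PL m k t, phiPull m k δ = γ := by
  choose P hPdeg hPγ using fun g : Fin k → Fin m => hγ (frame g)
  have hP_swap : ∀ g (a b : Fin k), a ≠ b → P (g ∘ Equiv.swap a b) = -P g :=
    fun g a b hab => MvPolynomial.funext fun x => by
      rw [← hPγ, map_neg, ← hPγ]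
      exact (γ x).map_swap (frame g) hab
  -- `2⁻ᵏ` cancels the factor `2` that `dΦ` contributes in each of the `k` slots.
  let c : Vec m → (Fin k → Fin m) → ℝ := fun y g => (2 ^ k)⁻¹ * eval y (halfPoly (P g))
  have hc : ∀ y g (a b : Fin k), a ≠ b → c y (g ∘ Equiv.swap a b) = -c y g := by
    intro y g a b hab
    simp [c, hP_swap g a b hab, halfPoly_neg]
  refine ⟨fun y => altOfAntisymm (c y) (hc y), fun v => ?_, ?_⟩
  · refine ⟨∑ g, C ((2 ^ k)⁻¹ * ∏ i, v i (g i)) * halfPoly (P g),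
      degLE_sum fun g _ => (degLE_halfPoly_of_isEven hev (hPγ g) (hPdeg g)).C_mul _, fun y => ?_⟩
    simp only [altOfAntisymm_apply, map_sum, eval_mul, eval_C]
    exact Finset.sum_congr rfl fun g _ => by ring
  · funext u; ext v
    rw [phiPull_apply, altOfAntisymm_apply, apply_eq_sum_frame (γ u) v]
    refine Finset.sum_congr rfl fun g _ => ?_
    simp only [apply_frame_eq_of_isEven hev (hPγ g), dPhi_apply, c, Finset.prod_mul_distrib,
      Finset.prod_const, Finset.card_univ, Fintype.card_fin]
    field_simp

end EvenFactor

section Bijection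

variable {m k : ℕ}

lemma phiPull_iU (β : Form m (k + 1)) :
    phiPull m k (iU β) = iU ((2 : ℝ)⁻¹ • phiPull m (k + 1) β) := by
  rw [iU_smul, iU_phiPull, smul_smul, inv_mul_cancel₀ two_ne_zero, one_smul]

lemma mapsTo_phiPull_PLm (r : ℤ) :
    Set.MapsTo (phiPull m k) (PLm m k r) {α ∈ PLm m k (2 * r + k) | IsEven m k α} := by
  rintro _ ⟨β, hβ, rfl⟩
  refine ⟨⟨_, PL_smul _ ?_, (phiPull_iU β).symm⟩, isEven_phiPull _⟩
  convert phiPull_mem_PL hβ using 2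
  push_cast
  ring

lemma surjOn_phiPull_PLm (r : ℤ) :
    Set.SurjOn (phiPull m k) (PLm m k r) {α ∈ PLm m k (2 * r + k) | IsEven m k α} := by
  rintro _ ⟨⟨γ, hγ, rfl⟩, hev⟩
  have hγ' : symmetrize (List.finRange m) γ ∈ PL m (k + 1) (2 * (r - 1) + (k + 1 : ℕ)) := by
    convert symmetrize_mem_PL _ hγ using 2
    push_cast
    ring
  obtain ⟨δ, hδ, hδγ⟩ := exists_phiPull_eq_of_isEven hγ' (isEven_symmetrize_finRange γ)
  refine ⟨iU ((2 : ℝ) • δ), ⟨_, PL_smul 2 hδ, rfl⟩, ?_⟩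
  rw [phiPull_iU, phiPull_smul, smul_smul, inv_mul_cancel₀ two_ne_zero, one_smul, hδγ,
    iU_symmetrize, symmetrize_of_isEven _ hev]

end Bijection

theorem stmt8_general (n k r : ℕ) :
    Set.BijOn (phiPull (n + 1) k) (PLm (n + 1) k (r : ℤ))
      {α ∈ PLm (n + 1) k (2 * (r : ℤ) + k) | IsEven (n + 1) k α} ∧
    (∀ a b, phiPull (n + 1) k (a + b) = phiPull (n + 1) k a + phiPull (n + 1) k b) ∧
    (∀ (c : ℝ) a, phiPull (n + 1) k (c • a) = c • phiPull (n + 1) k a) :=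
  ⟨⟨mapsTo_phiPull_PLm r, (injOn_phiPull r).mono PLm_subset_PL, surjOn_phiPull_PLm r⟩,
    phiPull_add, phiPull_smul⟩

theorem stmt8 (n k r : ℕ) (hk : k ≤ n + 1) (hr : 1 ≤ r) :
    Set.BijOn (phiPull (n + 1) k) (PLm (n + 1) k (r : ℤ))
      {α ∈ PLm (n + 1) k (2 * (r : ℤ) + k) | IsEven (n + 1) k α} ∧
    (∀ a b, phiPull (n + 1) k (a + b) = phiPull (n + 1) k a + phiPull (n + 1) k b) ∧
    (∀ (c : ℝ) a, phiPull (n + 1) k (c • a) = c • phiPull (n + 1) k a) :=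
  stmt8_general n k r
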